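/- Let A, B : X → Y and C : Y → Y be bounded operators between Hilbert spaces. Then C maps M(A) contractively into M(B) (i.e., C(range A) ⊆ range B and ‖Cf‖_{M(B)} ≤ ‖f‖_{M(A)} for all f ∈ M(A)) if and only if C A A* C* ≤ B B* as self-adjoint operators on Y. -/

import Mathlib

open ContinuousLinearMap

/-- The range norm on `M(T) = range T`. -/
noncomputable def rangeNorm {X Y : Type*}
    [NormedAddCommGroup X] [InnerProductSpace ℂ X]
    [NormedAddCommGroup Y] [InnerProductSpace ℂ Y]
    (T : X →L[ℂ] Y) (y : Y) : ℝ :=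
  sInf {c : ℝ | ∃ x : X, T x = y ∧ ‖x‖ = c}

/-!
By Hahn–Banach and Riesz, `z ∈ M(B)` with `‖z‖_{M(B)} ≤ c` iff `‖⟪z, y⟫‖ ≤ c ‖B* y‖` for all `y`:
under this bound `B* y ↦ ⟪z, y⟫` is a well-defined functional of norm `≤ c`, and its Riesz
representative `w` solves `B w = z`. As `⟪C A x, y⟫ = ⟪x, A* C* y⟫`, contractivity of
`C : M(A) → M(B)` amounts to `‖A* C* y‖ ≤ ‖B* y‖` for all `y` (test with `x = A* C* y` in one
direction, Cauchy–Schwarz in the other), and this is `C A A* C* ≤ B B*`.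
-/

open scoped InnerProductSpace

section HahnBanach

variable {𝕜 E F : Type*} [RCLike 𝕜] [AddCommGroup E] [Module 𝕜 E]
  [SeminormedAddCommGroup F] [NormedSpace 𝕜 F]

theorem exists_strongDual_comp_eq_of_norm_le (T : E →ₗ[𝕜] F) (ℓ : E →ₗ[𝕜] 𝕜) {c : ℝ}
    (hc : 0 ≤ c) (h : ∀ x, ‖ℓ x‖ ≤ c * ‖T x‖) :
    ∃ g : StrongDual 𝕜 F, ‖g‖ ≤ c ∧ ∀ x, g (T x) = ℓ x := by
  have hker : LinearMap.ker T ≤ LinearMap.ker ℓ := fun x hx => by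
    simpa [LinearMap.mem_ker.1 hx] using h x
  let f : LinearMap.range T →ₗ[𝕜] 𝕜 :=
    (LinearMap.ker T).liftQ ℓ hker ∘ₗ T.quotKerEquivRange.symm.toLinearMap
  have hf : ∀ x, f ⟨T x, LinearMap.mem_range_self T x⟩ = ℓ x := fun x => by
    have : (⟨T x, LinearMap.mem_range_self T x⟩ : LinearMap.range T) =
        T.quotKerEquivRange (Submodule.Quotient.mk x) := rfl
    simp [f, this]
  have hbound : ∀ u, ‖f u‖ ≤ c * ‖u‖ := by
    rintro ⟨_, x, rfl⟩
    rw [hf]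
    exact h x
  obtain ⟨g, hg, hgnorm⟩ := exists_extension_norm_eq _ (f.mkContinuous c hbound)
  exact ⟨g, hgnorm ▸ f.mkContinuous_norm_le hc hbound, fun x => (hg _).trans (hf x)⟩

end HahnBanach

section Adjoint

variable {𝕜 X Y : Type*} [RCLike 𝕜]
  [NormedAddCommGroup X] [InnerProductSpace 𝕜 X] [CompleteSpace X]
  [NormedAddCommGroup Y] [InnerProductSpace 𝕜 Y] [CompleteSpace Y]

theorem exists_apply_eq_of_norm_inner_le (B : X →L[𝕜] Y) {z : Y} {c : ℝ} (hc : 0 ≤ c)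
    (h : ∀ y, ‖⟪z, y⟫_𝕜‖ ≤ c * ‖adjoint B y‖) : ∃ w, B w = z ∧ ‖w‖ ≤ c := by
  obtain ⟨g, hg, hgB⟩ :=
    exists_strongDual_comp_eq_of_norm_le (adjoint B).toLinearMap (innerₛₗ 𝕜 z) hc h
  refine ⟨(InnerProductSpace.toDual 𝕜 X).symm g, ext_inner_right 𝕜 fun y => ?_, by simpa using hg⟩
  rw [← adjoint_inner_right, InnerProductSpace.toDual_symm_apply]
  exact hgB y

theorem re_inner_comp_adjoint_apply (T : X →L[𝕜] Y) (y : Y) :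
    RCLike.re ⟪y, (T ∘L adjoint T) y⟫_𝕜 = ‖adjoint T y‖ ^ 2 := by
  simpa using (apply_norm_sq_eq_inner_adjoint_right (adjoint T) y).symm

theorem re_inner_comp_adjoint_le_iff (S T : X →L[𝕜] Y) :
    (∀ y, RCLike.re ⟪y, (S ∘L adjoint S) y⟫_𝕜 ≤ RCLike.re ⟪y, (T ∘L adjoint T) y⟫_𝕜) ↔
      ∀ y, ‖adjoint S y‖ ≤ ‖adjoint T y‖ := by
  simp only [re_inner_comp_adjoint_apply]
  exact forall_congr' fun y => sq_le_sq₀ (norm_nonneg _) (norm_nonneg _)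

end Adjoint

section RangeNorm

variable {X Y : Type*} [NormedAddCommGroup X] [InnerProductSpace ℂ X]
  [NormedAddCommGroup Y] [InnerProductSpace ℂ Y]

theorem rangeNorm_le_norm (T : X →L[ℂ] Y) (x : X) : rangeNorm T (T x) ≤ ‖x‖ :=
  csInf_le ⟨0, fun _ ⟨x', _, hx'⟩ => hx' ▸ norm_nonneg x'⟩ ⟨x, rfl, rfl⟩

theorem le_mul_rangeNorm (T : X →L[ℂ] Y) {z : Y} (hz : z ∈ LinearMap.range (T : X →ₗ[ℂ] Y))
    {a r : ℝ} (hr : 0 ≤ r) (h : ∀ x, T x = z → a ≤ r * ‖x‖) : a ≤ r * rangeNorm T z := by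
  obtain ⟨x₀, hx₀⟩ := hz
  rw [rangeNorm, ← smul_eq_mul, ← Real.sInf_smul_of_nonneg hr]
  refine le_csInf ⟨r • ‖x₀‖, Set.smul_mem_smul_set ⟨x₀, hx₀, rfl⟩⟩ ?_
  rintro _ ⟨_, ⟨x, hx, rfl⟩, rfl⟩
  exact h x hx

theorem mem_range_and_rangeNorm_le_iff [CompleteSpace X] [CompleteSpace Y] (T : X →L[ℂ] Y)
    {z : Y} {c : ℝ} (hc : 0 ≤ c) :
    (z ∈ LinearMap.range (T : X →ₗ[ℂ] Y) ∧ rangeNorm T z ≤ c) ↔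
      ∀ y, ‖⟪z, y⟫_ℂ‖ ≤ c * ‖adjoint T y‖ := by
  constructor
  · rintro ⟨hz, hle⟩ y
    calc ‖⟪z, y⟫_ℂ‖ ≤ ‖adjoint T y‖ * rangeNorm T z :=
          le_mul_rangeNorm T hz (norm_nonneg _) fun x hx => by
            rw [← hx, ← adjoint_inner_right, mul_comm]
            exact norm_inner_le_norm _ _
      _ ≤ ‖adjoint T y‖ * c := by gcongr
      _ = c * ‖adjoint T y‖ := mul_comm _ _
  · intro h
    obtain ⟨w, rfl, hw⟩ := exists_apply_eq_of_norm_inner_le T hc h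
    exact ⟨LinearMap.mem_range_self _ w, (rangeNorm_le_norm T w).trans hw⟩

end RangeNorm

section Douglas

variable {W X Y Z : Type*}
  [NormedAddCommGroup W] [InnerProductSpace ℂ W] [CompleteSpace W]
  [NormedAddCommGroup X] [InnerProductSpace ℂ X] [CompleteSpace X]
  [NormedAddCommGroup Y] [InnerProductSpace ℂ Y] [CompleteSpace Y]
  [NormedAddCommGroup Z] [InnerProductSpace ℂ Z] [CompleteSpace Z]

theorem norm_adjoint_comp_adjoint_le {A : X →L[ℂ] Y} {B : W →L[ℂ] Z} {C : Y →L[ℂ] Z}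
    (H : ∀ y ∈ LinearMap.range (A : X →ₗ[ℂ] Y),
      C y ∈ LinearMap.range (B : W →ₗ[ℂ] Z) ∧ rangeNorm B (C y) ≤ rangeNorm A y) (z : Z) :
    ‖adjoint A (adjoint C z)‖ ≤ ‖adjoint B z‖ := by
  set x := adjoint A (adjoint C z)
  obtain ⟨hCx, hle⟩ := H (A x) (LinearMap.mem_range_self _ x)
  have hx : ‖⟪C (A x), z⟫_ℂ‖ ≤ ‖x‖ * ‖adjoint B z‖ :=
    (mem_range_and_rangeNorm_le_iff B (norm_nonneg x)).1
      ⟨hCx, hle.trans (rangeNorm_le_norm A x)⟩ z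
  rw [← adjoint_inner_right, ← adjoint_inner_right, inner_self_eq_norm_sq_to_K] at hx
  simp only [Complex.coe_algebraMap, norm_pow, Complex.norm_real, norm_norm] at hx
  nlinarith [norm_nonneg x, norm_nonneg (adjoint B z)]

theorem mem_range_and_rangeNorm_le_of_norm_adjoint_le {A : X →L[ℂ] Y} {B : W →L[ℂ] Z}
    {C : Y →L[ℂ] Z} (H : ∀ z, ‖adjoint A (adjoint C z)‖ ≤ ‖adjoint B z‖) (x : X) :
    C (A x) ∈ LinearMap.range (B : W →ₗ[ℂ] Z) ∧ rangeNorm B (C (A x)) ≤ rangeNorm A (A x) := by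
  have hcontr : ∀ x', A x' = A x →
      C (A x) ∈ LinearMap.range (B : W →ₗ[ℂ] Z) ∧ rangeNorm B (C (A x)) ≤ ‖x'‖ :=
    fun x' hx' => (mem_range_and_rangeNorm_le_iff B (norm_nonneg x')).2 fun z => by
      rw [← hx', ← adjoint_inner_right, ← adjoint_inner_right]
      exact (norm_inner_le_norm _ _).trans (by gcongr; exact H z)
  refine ⟨(hcontr x rfl).1, ?_⟩
  simpa using le_mul_rangeNorm A ⟨x, rfl⟩ zero_le_one fun x' hx' => by
    simpa using (hcontr x' hx').2

end Douglas

/-- Douglas's criterion: `C` maps `M(A)` contractively into `M(B)`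
if and only if `C A A* C* ≤ B B*`. -/
theorem stmt14 {X Y : Type*}
    [NormedAddCommGroup X] [InnerProductSpace ℂ X] [CompleteSpace X]
    [NormedAddCommGroup Y] [InnerProductSpace ℂ Y] [CompleteSpace Y]
    (A B : X →L[ℂ] Y) (C : Y →L[ℂ] Y) :
    (∀ y ∈ LinearMap.range (A : X →ₗ[ℂ] Y),
        C y ∈ LinearMap.range (B : X →ₗ[ℂ] Y) ∧ rangeNorm B (C y) ≤ rangeNorm A y) ↔
    (∀ y : Y,
      (inner ℂ y ((C ∘L A ∘L adjoint A ∘L adjoint C) y) : ℂ).re ≤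
      (inner ℂ y ((B ∘L adjoint B) y) : ℂ).re) := by
  have hCA : C ∘L A ∘L adjoint A ∘L adjoint C = (C ∘L A) ∘L adjoint (C ∘L A) := by
    rw [adjoint_comp]; rfl
  refine Iff.trans ?_ (hCA ▸ re_inner_comp_adjoint_le_iff (C ∘L A) B).symm
  simp only [adjoint_comp, comp_apply]
  refine ⟨norm_adjoint_comp_adjoint_le, fun H => ?_⟩
  rintro _ ⟨x, rfl⟩
  exact mem_range_and_rangeNorm_le_of_norm_adjoint_le H x
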